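/- (Theorem 3) For every real time t, the residual battery capacity R(t) := (ε₄ − ε₁) − 2 ω_b |1 − 2 p(t)| − 2 ω_c |1 − 2 p(t)| satisfies R(t) = ε₄ − ε₁ − 2(ω_b + ω_c)√(1 − E(t)²); in particular R(t) increases monotonically with the battery–charger entanglement E(t). -/

import Mathlib

open Complex

/- The evolved state is normalised, |α|² + |β|² = 1, because the mixing ratios satisfy
ξ₁ ξ₂ = −1. Hence 1 − 2p = |α|² − |β|², and 1 − E² = (|α|² + |β|²)² − 4|α|²|β|² is its square. -/

lemma norm_exp_neg_I_mul_ofReal (x : ℝ) : ‖exp (-I * x)‖ = 1 := by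
  rw [neg_mul, mul_comm, ← neg_mul, ← ofReal_neg]
  exact norm_exp_ofReal_mul_I _

lemma div_mul_div_eq_neg_one_of_sq_eq {J Δ Ω : ℝ} (hJ : J ≠ 0) (hΩ : Ω ^ 2 = J ^ 2 + Δ ^ 2) :
    (Δ + Ω) / J * ((Δ - Ω) / J) = -1 := by
  field_simp
  linear_combination -hΩ

/- Expanding, the cross terms carry the factor 2 Re(a b̄)(ξ₁ ξ₂ + 1), which vanishes. -/
lemma norm_sq_add_norm_sq_of_mul_eq_neg_one {a b : ℂ} (ha : ‖a‖ = 1) (hb : ‖b‖ = 1)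
    {ξ₁ ξ₂ : ℝ} (hξ : ξ₁ * ξ₂ = -1) :
    ‖(a * ξ₁ - b * ξ₂) / (ξ₁ - ξ₂)‖ ^ 2 + ‖(a - b) / (ξ₁ - ξ₂)‖ ^ 2 = 1 := by
  have hsep : (ξ₁ - ξ₂) ^ 2 ≠ 0 := by nlinarith [sq_nonneg (ξ₁ + ξ₂)]
  have ha' : normSq a = 1 := by rw [← Complex.sq_norm, ha, one_pow]
  have hb' : normSq b = 1 := by rw [← Complex.sq_norm, hb, one_pow]
  rw [← ofReal_sub, norm_div, norm_div, norm_real, div_pow, div_pow, Real.norm_eq_abs, sq_abs,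
    ← add_div, div_eq_one_iff_eq hsep, Complex.sq_norm, Complex.sq_norm]
  simp only [normSq_apply, sub_re, sub_im, mul_re, mul_im, ofReal_re, ofReal_im] at ha' hb' ⊢
  linear_combination (ξ₁ ^ 2 + 1) * ha' + (ξ₂ ^ 2 + 1) * hb' +
    (2 - 2 * (a.re * b.re + a.im * b.im)) * hξ

lemma sqrt_one_sub_sq_two_mul_mul {x y : ℝ} (h : x ^ 2 + y ^ 2 = 1) :
    √(1 - (2 * x * y) ^ 2) = |1 - 2 * x ^ 2| := by
  rw [show 1 - (2 * x * y) ^ 2 = (1 - 2 * x ^ 2) ^ 2 by linear_combination (-4 * x ^ 2) * h,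
    Real.sqrt_sq_eq_abs]

theorem stmt_5_general (ωb ωc J1 t : ℝ) (hJ1 : J1 ≠ 0)
    (Δ Ω e1 e2 ξ1 ξ2 p : ℝ) (α β : ℂ)
    (hΩ : Ω = Real.sqrt (J1 ^ 2 + Δ ^ 2))
    (hξ1 : ξ1 = (Δ + Ω) / J1) (hξ2 : ξ2 = (Δ - Ω) / J1)
    (hα : α = (Complex.exp (-Complex.I * ((e1 * t : ℝ) : ℂ)) * (ξ1 : ℂ) -
        Complex.exp (-Complex.I * ((e2 * t : ℝ) : ℂ)) * (ξ2 : ℂ)) / ((ξ1 : ℂ) - (ξ2 : ℂ)))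
    (hβ : β = (Complex.exp (-Complex.I * ((e1 * t : ℝ) : ℂ)) -
        Complex.exp (-Complex.I * ((e2 * t : ℝ) : ℂ))) / ((ξ1 : ℂ) - (ξ2 : ℂ)))
    (hp : p = ‖α‖ ^ 2)
    (ε1 ε4 E R : ℝ)
    (hE : E = 2 * ‖α‖ * ‖β‖)
    (hR : R = (ε4 - ε1) - 2 * ωb * |1 - 2 * p| - 2 * ωc * |1 - 2 * p|) :
    R = ε4 - ε1 - 2 * (ωb + ωc) * Real.sqrt (1 - E ^ 2) := by
  have hΩsq : Ω ^ 2 = J1 ^ 2 + Δ ^ 2 := by rw [hΩ, Real.sq_sqrt (by positivity)]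
  have hξ : ξ1 * ξ2 = -1 := by
    rw [hξ1, hξ2]
    exact div_mul_div_eq_neg_one_of_sq_eq hJ1 hΩsq
  have hnorm : ‖α‖ ^ 2 + ‖β‖ ^ 2 = 1 := by
    rw [hα, hβ]
    exact norm_sq_add_norm_sq_of_mul_eq_neg_one (norm_exp_neg_I_mul_ofReal _)
      (norm_exp_neg_I_mul_ofReal _) hξ
  rw [hR, hE, hp, sqrt_one_sub_sq_two_mul_mul hnorm]
  ring

theorem stmt_5 (ωb ωc J1 J2 t : ℝ) (hωb : 0 < ωb) (hωc : 0 < ωc) (hJ1 : J1 ≠ 0)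
    (Δ Ω e1 e2 ξ1 ξ2 p : ℝ) (α β : ℂ)
    (hΔ : Δ = ωb - ωc) (hΩ : Ω = Real.sqrt (J1 ^ 2 + Δ ^ 2))
    (he1 : e1 = Ω - J2) (he2 : e2 = -Ω - J2)
    (hξ1 : ξ1 = (Δ + Ω) / J1) (hξ2 : ξ2 = (Δ - Ω) / J1)
    (hα : α = (Complex.exp (-Complex.I * ((e1 * t : ℝ) : ℂ)) * (ξ1 : ℂ) -
        Complex.exp (-Complex.I * ((e2 * t : ℝ) : ℂ)) * (ξ2 : ℂ)) / ((ξ1 : ℂ) - (ξ2 : ℂ)))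
    (hβ : β = (Complex.exp (-Complex.I * ((e1 * t : ℝ) : ℂ)) -
        Complex.exp (-Complex.I * ((e2 * t : ℝ) : ℂ))) / ((ξ1 : ℂ) - (ξ2 : ℂ)))
    (hp : p = ‖α‖ ^ 2)
    (ε1 ε4 E R : ℝ)
    (hε1 : ε1 = min (min (Ω - J2) (-Ω - J2)) (min (J2 + (ωb + ωc)) (J2 - (ωb + ωc))))
    (hε4 : ε4 = max (max (Ω - J2) (-Ω - J2)) (max (J2 + (ωb + ωc)) (J2 - (ωb + ωc))))
    (hE : E = 2 * ‖α‖ * ‖β‖)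
    (hR : R = (ε4 - ε1) - 2 * ωb * |1 - 2 * p| - 2 * ωc * |1 - 2 * p|) :
    R = ε4 - ε1 - 2 * (ωb + ωc) * Real.sqrt (1 - E ^ 2) :=
  stmt_5_general ωb ωc J1 t hJ1 Δ Ω e1 e2 ξ1 ξ2 p α β hΩ hξ1 hξ2 hα hβ hp ε1 ε4 E R hE hR
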